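/- arXiv:1106.1049 — 5 statements merged into one kernel-verified Lean document; each statement's English description precedes it below -/
import Mathlib

section
/- Let f : {-1,1}^n → ℝ be a pseudo-Boolean function with Fourier expansion f(x) = Σ_{I ∈ 𝓕} ŵ(I) χ_I(x), where 𝓕 is nonempty with |𝓕| = m, and suppose f has Fourier width ρ ≥ 0. Then ||f||_4 ≤ (2ρ + 1 - 2ρ/m)^{1/4} · ||f||_2; equivalently, E[f(x)^4] ≤ (2ρ + 1 - 2ρ/m) · E[f(x)^2]^2. -/
/-!
Squaring the Fourier expansion gives `f² = ∑_D g(D) χ_D` with `g(D) = ∑_{I ∆ J = D} ŵ(I) ŵ(J)`,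
so by Parseval `E[f⁴] = ∑_D g(D)²`, while `E[f²] = ∑_I ŵ(I)² =: S = g(∅)`.
For `D ≠ ∅` pick `i ∈ D`: each pair with `I ∆ J = D` has `i` in exactly one of `I`, `J`, and that
set determines the pair, so there are at most `2ρ` such pairs and Cauchy–Schwarz gives
`g(D)² ≤ 2ρ ∑_{I ∆ J = D} ŵ(I)² ŵ(J)²`. Summing over `D ≠ ∅` covers the off-diagonal pairs once,
so `E[f⁴] ≤ S² + 2ρ (S² - ∑_I ŵ(I)⁴)`, and `∑_I ŵ(I)⁴ ≥ S² / m` by Cauchy–Schwarz again.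
-/

/-- The ±1 value of a Boolean coordinate. -/
noncomputable def sgn (b : Bool) : ℝ := if b then 1 else -1

/-- Expectation of `g` over the uniform distribution on `{-1,1}^n`
(coordinates encoded as `Bool`). -/
noncomputable def pbExp (n : ℕ) (g : (Fin n → Bool) → ℝ) : ℝ :=
  (∑ x : Fin n → Bool, g x) / 2 ^ n

/-- The character `χ_I(x) = ∏_{i ∈ I} x_i`. -/
noncomputable def chi {n : ℕ} (I : Finset (Fin n)) (x : Fin n → Bool) : ℝ :=
  ∏ i ∈ I, sgn (x i)

/-- The `p`-norm `‖f‖_p = (E[|f(x)|^p])^{1/p}`. -/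
noncomputable def pbNorm (n : ℕ) (p : ℝ) (f : (Fin n → Bool) → ℝ) : ℝ :=
  (pbExp n (fun x => |f x| ^ p)) ^ (1 / p)

open Finset
open scoped symmDiff

lemma sgn_mul_self (b : Bool) : sgn b * sgn b = 1 := by
  cases b <;> simp [sgn]

section Characters

variable {n : ℕ}

lemma chi_eq_prod_univ (I : Finset (Fin n)) (x : Fin n → Bool) :
    chi I x = ∏ i, if i ∈ I then sgn (x i) else 1 :=
  (Fintype.prod_ite_mem I _).symm

lemma chi_mul_chi (I J : Finset (Fin n)) (x : Fin n → Bool) :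
    chi I x * chi J x = chi (I ∆ J) x := by
  simp only [chi_eq_prod_univ, ← prod_mul_distrib]
  refine prod_congr rfl fun i _ => ?_
  by_cases hI : i ∈ I <;> by_cases hJ : i ∈ J <;> simp [mem_symmDiff, hI, hJ, sgn_mul_self]

lemma sum_chi (K : Finset (Fin n)) :
    ∑ x : Fin n → Bool, chi K x = if K = ∅ then 2 ^ n else 0 := by
  have hcoord : ∀ i, ∑ b : Bool, (if i ∈ K then sgn b else 1) = if i ∈ K then 0 else 2 := by
    intro i
    split_ifs <;> norm_num [sgn]
  simp_rw [chi_eq_prod_univ, ← Fintype.prod_sum (fun i b => if i ∈ K then sgn b else 1), hcoord]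
  split_ifs with hK
  · simp [hK]
  · obtain ⟨i, hi⟩ := nonempty_iff_ne_empty.2 hK
    exact prod_eq_zero (mem_univ i) (if_pos hi)

lemma pbExp_chi (K : Finset (Fin n)) : pbExp n (chi K) = if K = ∅ then 1 else 0 := by
  rw [pbExp, sum_chi]
  split_ifs <;> simp

lemma pbExp_sum {ι : Type*} (s : Finset ι) (g : ι → (Fin n → Bool) → ℝ) :
    pbExp n (fun x => ∑ a ∈ s, g a x) = ∑ a ∈ s, pbExp n (g a) := by
  simp only [pbExp]
  rw [sum_comm, sum_div]

lemma pbExp_const_mul (c : ℝ) (g : (Fin n → Bool) → ℝ) :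
    pbExp n (fun x => c * g x) = c * pbExp n g := by
  simp [pbExp, ← mul_sum, mul_div_assoc]

lemma pbExp_nonneg {g : (Fin n → Bool) → ℝ} (hg : ∀ x, 0 ≤ g x) : 0 ≤ pbExp n g :=
  div_nonneg (sum_nonneg fun x _ => hg x) (by positivity)

lemma pbExp_sq_sum_chi (F : Finset (Finset (Fin n))) (c : Finset (Fin n) → ℝ) :
    pbExp n (fun x => (∑ K ∈ F, c K * chi K x) ^ 2) = ∑ K ∈ F, c K ^ 2 := by
  have hexpand : ∀ x, (∑ K ∈ F, c K * chi K x) ^ 2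
      = ∑ K ∈ F, ∑ L ∈ F, c K * c L * chi (K ∆ L) x := by
    intro x
    rw [sq, sum_mul_sum]
    refine sum_congr rfl fun K _ => sum_congr rfl fun L _ => ?_
    rw [← chi_mul_chi]
    ring
  simp_rw [hexpand, pbExp_sum, pbExp_const_mul, pbExp_chi, symmDiff_eq_empty, mul_ite, mul_one,
    mul_zero, sum_ite_eq, sq]
  exact sum_congr rfl fun K hK => if_pos hK

lemma pbNorm_of_even {k : ℕ} (hk : Even k) (f : (Fin n → Bool) → ℝ) :
    pbNorm n k f = pbExp n (fun x => f x ^ k) ^ (1 / (k : ℝ)) := by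
  simp only [pbNorm, Real.rpow_natCast, hk.pow_abs]

end Characters

section SymmDiffFibers

variable {α : Type*} [DecidableEq α] (F : Finset (Finset α)) (w : Finset α → ℝ)

def symmDiffConv (D : Finset α) : ℝ :=
  ∑ p ∈ F ×ˢ F with p.1 ∆ p.2 = D, w p.1 * w p.2

lemma symmDiffConv_empty : symmDiffConv F w ∅ = ∑ I ∈ F, w I ^ 2 := by
  have hdiag : {p ∈ F ×ˢ F | p.1 ∆ p.2 = ∅} = F.diag := by
    ext ⟨I, J⟩
    simp only [mem_filter, mem_product, symmDiff_eq_empty, mem_diag]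
    constructor
    · rintro ⟨⟨hI, -⟩, rfl⟩
      exact ⟨hI, rfl⟩
    · rintro ⟨hI, rfl⟩
      exact ⟨⟨hI, hI⟩, rfl⟩
  rw [symmDiffConv, hdiag, sum_diag]
  simp_rw [sq]

lemma sum_offDiag_sq_mul_sq :
    ∑ p ∈ F.offDiag, (w p.1 * w p.2) ^ 2 = (∑ I ∈ F, w I ^ 2) ^ 2 - ∑ I ∈ F, (w I ^ 2) ^ 2 := by
  have hsplit := sum_union (disjoint_diag_offDiag F) (f := fun p => (w p.1 * w p.2) ^ 2)
  rw [diag_union_offDiag, sum_product, sum_diag] at hsplit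
  rw [sq (∑ I ∈ F, _), sum_mul_sum]
  simp_rw [mul_pow] at hsplit ⊢
  simp_rw [sq (w _ ^ 2)]
  linarith

lemma card_filter_symmDiff_eq_le {ρ : ℕ} (hρ : ∀ i, #{I ∈ F | i ∈ I} ≤ ρ) {D : Finset α}
    (hD : D ≠ ∅) : #{p ∈ F ×ˢ F | p.1 ∆ p.2 = D} ≤ 2 * ρ := by
  obtain ⟨i, hi⟩ := nonempty_iff_ne_empty.2 hD
  set fiber := {p ∈ F ×ˢ F | p.1 ∆ p.2 = D}
  have hcover : fiber ⊆ {p ∈ fiber | i ∈ p.1} ∪ {p ∈ fiber | i ∈ p.2} := by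
    intro p hp
    have : i ∈ p.1 ∆ p.2 := (mem_filter.1 hp).2 ▸ hi
    rw [mem_symmDiff] at this
    rcases this with ⟨h, _⟩ | ⟨h, _⟩ <;> simp [hp, h]
  have hfst : #{p ∈ fiber | i ∈ p.1} ≤ ρ := by
    refine (card_le_card_of_injOn Prod.fst (fun p hp => ?_) fun p hp q hq hpq => ?_).trans (hρ i)
    · simp only [fiber, mem_coe, mem_filter, mem_product] at hp ⊢
      exact ⟨hp.1.1.1, hp.2⟩
    · simp only [fiber, mem_coe, mem_filter] at hp hq
      refine Prod.ext hpq ?_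
      rw [← symmDiff_symmDiff_cancel_left p.1 p.2, ← symmDiff_symmDiff_cancel_left q.1 q.2,
        hp.1.2, hq.1.2, hpq]
  have hsnd : #{p ∈ fiber | i ∈ p.2} ≤ ρ := by
    refine (card_le_card_of_injOn Prod.snd (fun p hp => ?_) fun p hp q hq hpq => ?_).trans (hρ i)
    · simp only [fiber, mem_coe, mem_filter, mem_product] at hp ⊢
      exact ⟨hp.1.1.2, hp.2⟩
    · simp only [fiber, mem_coe, mem_filter] at hp hq
      refine Prod.ext ?_ hpq
      rw [← symmDiff_symmDiff_cancel_right p.2 p.1, ← symmDiff_symmDiff_cancel_right q.2 q.1,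
        hp.1.2, hq.1.2, hpq]
  calc #fiber ≤ #{p ∈ fiber | i ∈ p.1} + #{p ∈ fiber | i ∈ p.2} :=
        (card_le_card hcover).trans (card_union_le _ _)
    _ ≤ 2 * ρ := by omega

lemma sq_symmDiffConv_le {ρ : ℕ} (hρ : ∀ i, #{I ∈ F | i ∈ I} ≤ ρ) {D : Finset α} (hD : D ≠ ∅) :
    symmDiffConv F w D ^ 2 ≤ 2 * ρ * ∑ p ∈ F ×ˢ F with p.1 ∆ p.2 = D, (w p.1 * w p.2) ^ 2 := by
  refine sq_sum_le_card_mul_sum_sq.trans (mul_le_mul_of_nonneg_right ?_ (by positivity))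
  exact_mod_cast card_filter_symmDiff_eq_le F hρ hD

lemma sum_sq_symmDiffConv_le {ρ : ℕ} (hρ : ∀ i, #{I ∈ F | i ∈ I} ≤ ρ) :
    ∑ D ∈ (F ×ˢ F).image (fun p => p.1 ∆ p.2), symmDiffConv F w D ^ 2
      ≤ (∑ I ∈ F, w I ^ 2) ^ 2
        + 2 * ρ * ((∑ I ∈ F, w I ^ 2) ^ 2 - ∑ I ∈ F, (w I ^ 2) ^ 2) := by
  set t := (F ×ˢ F).image (fun p => p.1 ∆ p.2)
  rw [← sum_filter_add_sum_filter_not t (· = ∅)]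
  gcongr ?_ + ?_
  · calc ∑ D ∈ t with D = ∅, symmDiffConv F w D ^ 2 ≤ ∑ D ∈ {∅}, symmDiffConv F w D ^ 2 :=
          sum_le_sum_of_subset_of_nonneg (fun D hD => by simp [(mem_filter.1 hD).2])
            fun _ _ _ => sq_nonneg _
      _ = (∑ I ∈ F, w I ^ 2) ^ 2 := by rw [sum_singleton, symmDiffConv_empty]
  · calc ∑ D ∈ t with ¬D = ∅, symmDiffConv F w D ^ 2
          ≤ ∑ D ∈ t with ¬D = ∅, 2 * ρ * ∑ p ∈ F ×ˢ F with p.1 ∆ p.2 = D, (w p.1 * w p.2) ^ 2 :=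
          sum_le_sum fun D hD => sq_symmDiffConv_le F w hρ (mem_filter.1 hD).2
      _ = 2 * ρ * ∑ p ∈ F.offDiag, (w p.1 * w p.2) ^ 2 := by
          rw [← mul_sum, sum_fiberwise_eq_sum_filter]
          congr 2
          ext ⟨I, J⟩
          simp only [t, mem_filter, mem_image, mem_product, mem_offDiag, symmDiff_eq_empty]
          exact ⟨fun ⟨hIJ, _, hne⟩ => ⟨hIJ.1, hIJ.2, hne⟩,
            fun ⟨hI, hJ, hne⟩ => ⟨⟨hI, hJ⟩, ⟨(I, J), ⟨hI, hJ⟩, rfl⟩, hne⟩⟩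
      _ = _ := by rw [sum_offDiag_sq_mul_sq]

end SymmDiffFibers

lemma sq_sum_chi_eq {n : ℕ} (F : Finset (Finset (Fin n))) (w : Finset (Fin n) → ℝ)
    (x : Fin n → Bool) :
    (∑ I ∈ F, w I * chi I x) ^ 2
      = ∑ D ∈ (F ×ˢ F).image (fun p => p.1 ∆ p.2), symmDiffConv F w D * chi D x := by
  rw [sq, sum_mul_sum, ← sum_product',
    ← sum_fiberwise_of_maps_to fun p hp => mem_image_of_mem (fun p => p.1 ∆ p.2) hp]
  refine sum_congr rfl fun D _ => ?_
  rw [symmDiffConv, sum_mul]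
  refine sum_congr rfl fun p hp => ?_
  rw [← (mem_filter.1 hp).2, ← chi_mul_chi]
  ring

lemma pbNorm_four_le {n : ℕ} {f : (Fin n → Bool) → ℝ} {c : ℝ} (hc : 0 ≤ c)
    (h : pbExp n (fun x => f x ^ 4) ≤ c * pbExp n (fun x => f x ^ 2) ^ 2) :
    pbNorm n 4 f ≤ c ^ ((1 : ℝ) / 4) * pbNorm n 2 f := by
  have hE2 : 0 ≤ pbExp n (fun x => f x ^ 2) := pbExp_nonneg fun x => sq_nonneg (f x)
  have h4 := pbNorm_of_even (k := 4) (by decide) f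
  have h2 := pbNorm_of_even (k := 2) (by decide) f
  push_cast at h4 h2
  rw [h4, h2]
  calc pbExp n (fun x => f x ^ 4) ^ ((1 : ℝ) / 4)
      ≤ (c * pbExp n (fun x => f x ^ 2) ^ 2) ^ ((1 : ℝ) / 4) :=
        Real.rpow_le_rpow (pbExp_nonneg fun x => by positivity) h (by norm_num)
    _ = c ^ ((1 : ℝ) / 4) * pbExp n (fun x => f x ^ 2) ^ ((1 : ℝ) / 2) := by
        rw [Real.mul_rpow hc (by positivity), ← Real.rpow_natCast, ← Real.rpow_mul hE2]
        norm_num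

theorem hypercontractive_42_width_general (n m ρ : ℕ)
    (𝓕 : Finset (Finset (Fin n))) (hm : 𝓕.card = m)
    (w : Finset (Fin n) → ℝ)
    (f : (Fin n → Bool) → ℝ) (hf : ∀ x, f x = ∑ I ∈ 𝓕, w I * chi I x)
    (hρ : ∀ i : Fin n, (𝓕.filter (fun I => i ∈ I)).card ≤ ρ) :
    pbNorm n 4 f ≤ ((2 * ρ + 1 - 2 * ρ / m : ℝ)) ^ ((1 : ℝ) / 4) * pbNorm n 2 f ∧
    pbExp n (fun x => f x ^ 4) ≤
      (2 * ρ + 1 - 2 * ρ / m : ℝ) * (pbExp n (fun x => f x ^ 2)) ^ 2 := by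
  set S := ∑ I ∈ 𝓕, w I ^ 2
  have hE2 : pbExp n (fun x => f x ^ 2) = S := by
    simp_rw [hf]
    exact pbExp_sq_sum_chi 𝓕 w
  have hE4 : pbExp n (fun x => f x ^ 4) ≤ S ^ 2 + 2 * ρ * (S ^ 2 - ∑ I ∈ 𝓕, (w I ^ 2) ^ 2) := by
    have hf4 : ∀ x, f x ^ 4 = (∑ D ∈ (𝓕 ×ˢ 𝓕).image (fun p => p.1 ∆ p.2),
        symmDiffConv 𝓕 w D * chi D x) ^ 2 := by
      intro x
      rw [← sq_sum_chi_eq, ← hf]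
      ring
    simp_rw [hf4, pbExp_sq_sum_chi]
    exact sum_sq_symmDiffConv_le 𝓕 w hρ
  have hcs : S ^ 2 / m ≤ ∑ I ∈ 𝓕, (w I ^ 2) ^ 2 := by
    refine div_le_of_le_mul₀ m.cast_nonneg (by positivity) ?_
    rw [mul_comm, ← hm]
    exact sq_sum_le_card_mul_sum_sq
  have hc : 0 ≤ (2 * ρ + 1 - 2 * ρ / m : ℝ) := by
    rcases m.eq_zero_or_pos with rfl | hm0
    · simp only [Nat.cast_zero, div_zero, sub_zero]
      positivity
    · have : (2 * ρ / m : ℝ) ≤ 2 * ρ := div_le_self (by positivity) (by exact_mod_cast hm0)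
      linarith
  have hmain : pbExp n (fun x => f x ^ 4) ≤
      (2 * ρ + 1 - 2 * ρ / m : ℝ) * (pbExp n (fun x => f x ^ 2)) ^ 2 := by
    calc pbExp n (fun x => f x ^ 4) ≤ S ^ 2 + 2 * ρ * (S ^ 2 - ∑ I ∈ 𝓕, (w I ^ 2) ^ 2) := hE4
      _ ≤ S ^ 2 + 2 * ρ * (S ^ 2 - S ^ 2 / m) := by gcongr
      _ = _ := by
          rw [hE2]
          ring
  exact ⟨pbNorm_four_le hc hmain, hmain⟩

/-- **(4,2)-Hypercontractive Inequality for bounded Fourier width.**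
If `f : {-1,1}^n → ℝ` has Fourier expansion `f = ∑_{I ∈ 𝓕} ŵ(I) χ_I` with `𝓕` nonempty,
`|𝓕| = m`, and every coordinate `i` appears in at most `ρ` sets of `𝓕` (Fourier width `ρ`),
then `‖f‖₄ ≤ (2ρ + 1 - 2ρ/m)^{1/4} ‖f‖₂`; equivalently
`E[f(x)^4] ≤ (2ρ + 1 - 2ρ/m) E[f(x)^2]^2`. -/
theorem hypercontractive_42_width (n m ρ : ℕ)
    (𝓕 : Finset (Finset (Fin n))) (h𝓕 : 𝓕.Nonempty) (hm : 𝓕.card = m)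
    (w : Finset (Fin n) → ℝ) (hw : ∀ I ∈ 𝓕, w I ≠ 0)
    (f : (Fin n → Bool) → ℝ) (hf : ∀ x, f x = ∑ I ∈ 𝓕, w I * chi I x)
    (hρ : ∀ i : Fin n, (𝓕.filter (fun I => i ∈ I)).card ≤ ρ) :
    pbNorm n 4 f ≤ ((2 * ρ + 1 - 2 * ρ / m : ℝ)) ^ ((1 : ℝ) / 4) * pbNorm n 2 f ∧
    pbExp n (fun x => f x ^ 4) ≤
      (2 * ρ + 1 - 2 * ρ / m : ℝ) * (pbExp n (fun x => f x ^ 2)) ^ 2 :=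
  hypercontractive_42_width_general n m ρ 𝓕 hm w f hf hρ
end

section
/- Let f : {-1,1}^n → ℝ be a pseudo-Boolean function of Fourier width ρ ≥ 1. Then for each positive integer r, ||f||_{2r} ≤ ((2r)! · ρ^{r-1})^{1/(2r)} · ||f||_2; equivalently, E[f(x)^{2r}] ≤ (2r)! · ρ^{r-1} · E[f(x)^2]^r. -/
open Finset
open scoped Nat

theorem Nat.pow_self_le_factorial_sq (n : ℕ) : n ^ n ≤ n ! ^ 2 := by
  calc n ^ n = ∏ _i ∈ range n, n := by rw [prod_const, card_range]
    _ ≤ ∏ i ∈ range n, ((i + 1) * (n - i)) := by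
      refine prod_le_prod' fun i hi => ?_
      obtain ⟨k, rfl⟩ := Nat.exists_eq_add_of_lt (mem_range.mp hi)
      rw [show i + k + 1 - i = k + 1 by omega]
      nlinarith
    _ = n ! ^ 2 := by
      rw [prod_mul_distrib, prod_range_add_one_eq_factorial, sq]
      congr 1
      rw [← prod_range_reflect, ← prod_range_add_one_eq_factorial]
      exact prod_congr rfl fun i hi => by have := mem_range.mp hi; omega

theorem Nat.descFactorial_two_mul_le (r m : ℕ) :
    (2 * r).descFactorial (2 * m) ≤ 2 ^ m * r.descFactorial m * (2 * r) ^ m := by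
  induction m with
  | zero => simp
  | succ m ih =>
    rw [show 2 * (m + 1) = 2 * m + 1 + 1 by ring, Nat.descFactorial_succ, Nat.descFactorial_succ,
      Nat.descFactorial_succ, pow_succ, pow_succ]
    have h2 : 2 * r - 2 * m = 2 * (r - m) := by omega
    rw [h2]
    calc (2 * r - (2 * m + 1)) * (2 * (r - m) * (2 * r).descFactorial (2 * m))
        ≤ 2 * r * (2 * (r - m) * (2 ^ m * r.descFactorial m * (2 * r) ^ m)) := by gcongr; omega
      _ = 2 ^ m * 2 * ((r - m) * r.descFactorial m) * ((2 * r) ^ m * (2 * r)) := by ring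

theorem Nat.choose_two_mul_le (r m : ℕ) : (2 * r).choose (2 * m) ≤ r.choose m * (2 * r) ^ m := by
  refine Nat.le_of_mul_le_mul_right ?_ (Nat.factorial_pos (2 * m))
  calc (2 * r).choose (2 * m) * (2 * m)! = (2 * r).descFactorial (2 * m) := by
        rw [Nat.descFactorial_eq_factorial_mul_choose, mul_comm]
    _ ≤ 2 ^ m * r.descFactorial m * (2 * r) ^ m := Nat.descFactorial_two_mul_le r m
    _ = 2 ^ m * m ! * (r.choose m * (2 * r) ^ m) := by
        rw [Nat.descFactorial_eq_factorial_mul_choose]; ring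
    _ ≤ (2 * m)! * (r.choose m * (2 * r) ^ m) := by
        gcongr; exact Nat.two_pow_mul_factorial_le_factorial_two_mul m
    _ = r.choose m * (2 * r) ^ m * (2 * m)! := mul_comm _ _

theorem Nat.pow_le_factorial_two_mul (r : ℕ) : (2 * r) ^ r ≤ (2 * r)! := by
  refine (Nat.pow_le_pow_iff_left two_ne_zero).mp ?_
  rw [← pow_mul, mul_comm r 2]
  exact Nat.pow_self_le_factorial_sq (2 * r)

theorem Nat.choose_two_mul_pow_le (r m : ℕ) :
    (2 * r).choose (2 * m) ^ r ≤ r.choose m ^ r * (2 * r)! ^ m :=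
  calc (2 * r).choose (2 * m) ^ r ≤ (r.choose m * (2 * r) ^ m) ^ r := by
        gcongr; exact Nat.choose_two_mul_le r m
    _ = r.choose m ^ r * ((2 * r) ^ r) ^ m := by ring
    _ ≤ r.choose m ^ r * (2 * r)! ^ m := by gcongr; exact Nat.pow_le_factorial_two_mul r

theorem Finset.sum_range_two_mul_add_one_of_odd_eq_zero {M : Type*} [AddCommMonoid M]
    (a : ℕ → M) (ha : ∀ k, Odd k → a k = 0) (r : ℕ) :
    ∑ k ∈ range (2 * r + 1), a k = ∑ j ∈ range (r + 1), a (2 * j) := by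
  induction r with
  | zero => simp
  | succ r ih =>
    rw [show 2 * (r + 1) + 1 = 2 * r + 1 + 1 + 1 by ring, sum_range_succ, sum_range_succ, ih,
      ha _ (odd_two_mul_add_one r), add_zero, sum_range_succ _ (r + 1), mul_add_one]

theorem Finset.sum_pow_mul_pow_le {ι : Type*} (s : Finset ι) {f g : ι → ℝ}
    (hf : ∀ i ∈ s, 0 ≤ f i) (hg : ∀ i ∈ s, 0 ≤ g i) (a b : ℕ) :
    (∑ i ∈ s, f i ^ a * g i ^ b) ^ (a + b) ≤
      (∑ i ∈ s, f i ^ (a + b)) ^ a * (∑ i ∈ s, g i ^ (a + b)) ^ b := by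
  rcases Nat.eq_zero_or_pos a with rfl | ha
  · simp
  rcases Nat.eq_zero_or_pos b with rfl | hb
  · simp
  set c : ℝ := ((a + b : ℕ) : ℝ)
  have hc : 0 < c := by positivity
  have hpq : Real.HolderConjugate (c / a) (c / b) := by
    rw [Real.holderConjugate_iff]
    refine ⟨(one_lt_div (by positivity)).mpr (by simp [c]; positivity), ?_⟩
    rw [inv_div, inv_div, ← add_div, div_eq_one_iff_eq hc.ne']
    push_cast [c]; rfl
  have hpow {h : ι → ℝ} (hh : ∀ i ∈ s, 0 ≤ h i) (k : ℕ) (hk : 0 < k) :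
      ∑ i ∈ s, (h i ^ k) ^ (c / k) = ∑ i ∈ s, h i ^ (a + b) := by
    refine sum_congr rfl fun i hi => ?_
    rw [← Real.rpow_natCast, ← Real.rpow_mul (hh i hi), mul_div_cancel₀ _ (by positivity),
      Real.rpow_natCast]
  have holder := Real.inner_le_Lp_mul_Lq_of_nonneg s hpq (f := fun i => f i ^ a)
    (g := fun i => g i ^ b) (fun i hi => pow_nonneg (hf i hi) a)
    (fun i hi => pow_nonneg (hg i hi) b)
  simp only [hpow hf a ha, hpow hg b hb, one_div_div] at holder
  have hF : 0 ≤ ∑ i ∈ s, f i ^ (a + b) := sum_nonneg fun i hi => pow_nonneg (hf i hi) _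
  have hG : 0 ≤ ∑ i ∈ s, g i ^ (a + b) := sum_nonneg fun i hi => pow_nonneg (hg i hi) _
  have hroot {S : ℝ} (hS : 0 ≤ S) (k : ℕ) : (S ^ ((k : ℝ) / c)) ^ (a + b) = S ^ k := by
    rw [← Real.rpow_natCast, ← Real.rpow_mul hS, div_mul_cancel₀ _ hc.ne', Real.rpow_natCast]
  calc (∑ i ∈ s, f i ^ a * g i ^ b) ^ (a + b)
      ≤ ((∑ i ∈ s, f i ^ (a + b)) ^ ((a : ℝ) / c) *
          (∑ i ∈ s, g i ^ (a + b)) ^ ((b : ℝ) / c)) ^ (a + b) :=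
        pow_le_pow_left₀ (sum_nonneg fun i hi => by have := hf i hi; have := hg i hi; positivity)
          holder _
    _ = _ := by rw [mul_pow, hroot hF, hroot hG]

namespace PseudoBoolean

variable {n : ℕ}

lemma sgn_mul_self (b : Bool) : sgn b * sgn b = 1 := by cases b <;> simp [sgn]

lemma pbExp_nonneg {g : (Fin n → Bool) → ℝ} (hg : ∀ x, 0 ≤ g x) : 0 ≤ pbExp n g :=
  div_nonneg (sum_nonneg fun x _ => hg x) (by positivity)

lemma pbExp_mono {g h : (Fin n → Bool) → ℝ} (hgh : ∀ x, g x ≤ h x) : pbExp n g ≤ pbExp n h :=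
  div_le_div_of_nonneg_right (sum_le_sum fun x _ => hgh x) (by positivity)

lemma pbExp_const (c : ℝ) : pbExp n (fun _ => c) = c := by
  simp [pbExp]

lemma pbExp_sum {ι : Type*} (s : Finset ι) (g : ι → (Fin n → Bool) → ℝ) :
    pbExp n (fun x => ∑ k ∈ s, g k x) = ∑ k ∈ s, pbExp n (g k) := by
  rw [pbExp, sum_comm, sum_div]; rfl

lemma pbExp_const_mul (c : ℝ) (g : (Fin n → Bool) → ℝ) :
    pbExp n (fun x => c * g x) = c * pbExp n g := by
  rw [pbExp, pbExp, ← mul_sum, mul_div_assoc]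

lemma pbExp_pow_mul_pow_le {g h : (Fin n → Bool) → ℝ} (hg : ∀ x, 0 ≤ g x) (hh : ∀ x, 0 ≤ h x)
    (a b : ℕ) :
    pbExp n (fun x => g x ^ a * h x ^ b) ^ (a + b) ≤
      pbExp n (fun x => g x ^ (a + b)) ^ a * pbExp n (fun x => h x ^ (a + b)) ^ b := by
  simp only [pbExp, div_pow, pow_add (2 ^ n : ℝ) a b]
  rw [div_mul_div_comm]
  gcongr
  exact sum_pow_mul_pow_le _ (fun x _ => hg x) (fun x _ => hh x) a b

def flipAt (i : Fin n) (x : Fin n → Bool) : Fin n → Bool := Function.update x i (!x i)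

lemma flipAt_involutive (i : Fin n) : Function.Involutive (flipAt i) := by
  intro x
  ext j
  by_cases hj : j = i
  · subst hj; simp [flipAt]
  · simp [flipAt, hj]

lemma pbExp_eq_zero_of_flipAt {g : (Fin n → Bool) → ℝ} (i : Fin n)
    (hg : ∀ x, g (flipAt i x) = -g x) : pbExp n g = 0 := by
  have hsum : ∑ x, g x = -∑ x, g x := by
    conv_lhs => rw [← (flipAt_involutive i).bijective.sum_comp g]
    simp only [hg, sum_neg_distrib]
  rw [pbExp, show ∑ x, g x = 0 by linarith, zero_div]

lemma chi_flipAt_of_notMem {I : Finset (Fin n)} {i : Fin n} (hi : i ∉ I) (x : Fin n → Bool) :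
    chi I (flipAt i x) = chi I x :=
  prod_congr rfl fun j hj => by rw [flipAt, Function.update_of_ne (ne_of_mem_of_not_mem hj hi)]

lemma chi_flipAt_of_mem {I : Finset (Fin n)} {i : Fin n} (hi : i ∈ I) (x : Fin n → Bool) :
    chi I (flipAt i x) = -chi I x := by
  rw [chi, chi, ← mul_prod_erase _ _ hi, ← mul_prod_erase _ _ hi, flipAt, Function.update_self,
    prod_congr rfl fun j hj => by rw [Function.update_of_ne (ne_of_mem_erase hj)]]
  cases x i <;> simp [sgn]

lemma chi_mul_self (I : Finset (Fin n)) (x : Fin n → Bool) : chi I x * chi I x = 1 := by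
  rw [chi, ← prod_mul_distrib]; exact prod_eq_one fun i _ => sgn_mul_self (x i)

lemma chi_mul_chi (I J : Finset (Fin n)) (x : Fin n → Bool) :
    chi I x * chi J x = chi (symmDiff I J) x := by
  have hunion : chi (I ∪ J) x = chi (symmDiff I J) x * chi (I ∩ J) x := by
    rw [symmDiff_eq_sup_sdiff_inf]; exact (prod_sdiff inter_subset_union).symm
  rw [chi, chi, ← prod_union_inter, ← chi, ← chi, hunion, mul_assoc, chi_mul_self, mul_one]

lemma pbExp_chi_mul_chi (I J : Finset (Fin n)) :
    pbExp n (fun x => chi I x * chi J x) = if I = J then 1 else 0 := by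
  simp_rw [chi_mul_chi]
  split_ifs with h
  · simp [h, chi, pbExp_const]
  · obtain ⟨i, hi⟩ : (symmDiff I J).Nonempty := by
      rwa [nonempty_iff_ne_empty, ne_eq, ← bot_eq_empty, symmDiff_eq_bot]
    exact pbExp_eq_zero_of_flipAt i fun x => chi_flipAt_of_mem hi x

noncomputable def fourierSum (𝓖 : Finset (Finset (Fin n))) (v : Finset (Fin n) → ℝ)
    (x : Fin n → Bool) : ℝ :=
  ∑ I ∈ 𝓖, v I * chi I x

lemma pbExp_fourierSum_sq (𝓖 : Finset (Finset (Fin n))) (v : Finset (Fin n) → ℝ) :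
    pbExp n (fun x => fourierSum 𝓖 v x ^ 2) = ∑ I ∈ 𝓖, v I ^ 2 := by
  have hterm (I J : Finset (Fin n)) :
      pbExp n (fun x => v I * chi I x * (v J * chi J x)) = if I = J then v I * v J else 0 := by
    simp_rw [mul_mul_mul_comm (v I)]
    rw [pbExp_const_mul, pbExp_chi_mul_chi, mul_ite, mul_one, mul_zero]
  simp_rw [fourierSum, sq, sum_mul_sum, pbExp_sum, hterm, sum_ite_eq]
  exact sum_congr rfl fun I hI => by rw [if_pos hI]

lemma fourierSum_sq_le (𝓖 : Finset (Finset (Fin n))) (v : Finset (Fin n) → ℝ)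
    (x : Fin n → Bool) : fourierSum 𝓖 v x ^ 2 ≤ #𝓖 * ∑ I ∈ 𝓖, v I ^ 2 := by
  calc fourierSum 𝓖 v x ^ 2 ≤ #𝓖 * ∑ I ∈ 𝓖, (v I * chi I x) ^ 2 := sq_sum_le_card_mul_sum_sq
    _ = #𝓖 * ∑ I ∈ 𝓖, v I ^ 2 := by simp_rw [mul_pow, sq (chi _ x), chi_mul_self, mul_one]

lemma pbExp_fourierSum_pow_le_of_card_le {𝓖 : Finset (Finset (Fin n))} {ρ : ℕ} (h𝓖 : #𝓖 ≤ ρ)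
    (v : Finset (Fin n) → ℝ) {r : ℕ} (hr : 0 < r) :
    pbExp n (fun x => fourierSum 𝓖 v x ^ (2 * r)) ≤ ρ ^ (r - 1) * (∑ I ∈ 𝓖, v I ^ 2) ^ r := by
  set T := ∑ I ∈ 𝓖, v I ^ 2
  have hT : 0 ≤ T := sum_nonneg fun I _ => sq_nonneg (v I)
  have hpointwise (x : Fin n → Bool) :
      fourierSum 𝓖 v x ^ (2 * r) ≤ (ρ * T) ^ (r - 1) * fourierSum 𝓖 v x ^ 2 := by
    rw [show 2 * r = 2 * (r - 1) + 2 by omega, pow_add, pow_mul]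
    gcongr
    exact (fourierSum_sq_le 𝓖 v x).trans (by gcongr)
  calc pbExp n (fun x => fourierSum 𝓖 v x ^ (2 * r))
      ≤ pbExp n (fun x => (ρ * T) ^ (r - 1) * fourierSum 𝓖 v x ^ 2) := pbExp_mono hpointwise
    _ = ρ ^ (r - 1) * T ^ r := by
      rw [pbExp_const_mul, pbExp_fourierSum_sq, mul_pow, mul_assoc, ← pow_succ,
        Nat.sub_add_cancel hr]

lemma pbExp_add_pow_two_mul {g h : (Fin n → Bool) → ℝ} (i : Fin n)
    (hg : ∀ x, g (flipAt i x) = -g x) (hh : ∀ x, h (flipAt i x) = h x) (r : ℕ) :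
    pbExp n (fun x => (g x + h x) ^ (2 * r)) =
      ∑ j ∈ range (r + 1),
        (2 * r).choose (2 * j) * pbExp n (fun x => (g x ^ 2) ^ j * (h x ^ 2) ^ (r - j)) := by
  simp_rw [add_pow, pbExp_sum]
  rw [sum_range_two_mul_add_one_of_odd_eq_zero]
  · refine sum_congr rfl fun j hj => ?_
    rw [← pbExp_const_mul]
    congr 1
    ext x
    rw [← pow_mul, ← pow_mul, Nat.mul_sub, mul_comm]
  · intro k hk
    exact pbExp_eq_zero_of_flipAt i fun x => by rw [hg, hh, hk.neg_pow]; ring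

/-- `M` stands for a mixed moment `E[q^{2j} g^{2(r-j)}]`, whose `r`-th power Hölder bounds. -/
lemma choose_mul_le_of_pow_le {r j : ℕ} (hr : 0 < r) (hj : j ≤ r) {M P A B : ℝ} (hP : 0 ≤ P)
    (hA : 0 ≤ A) (hB : 0 ≤ B)
    (h : M ^ r ≤ (P * A ^ r) ^ j * ((2 * r)! * P * B ^ r) ^ (r - j)) :
    (2 * r).choose (2 * j) * M ≤ (2 * r)! * P * (A ^ j * B ^ (r - j) * r.choose j) := by
  have hchoose : ((2 * r).choose (2 * j) : ℝ) ^ r ≤ (r.choose j : ℝ) ^ r * ((2 * r)! : ℝ) ^ j := by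
    exact_mod_cast Nat.choose_two_mul_pow_le r j
  refine le_of_pow_le_pow_left₀ hr.ne' (by positivity) ?_
  obtain ⟨k, rfl⟩ := Nat.exists_eq_add_of_le hj
  rw [Nat.add_sub_cancel_left] at h ⊢
  calc ((2 * (j + k)).choose (2 * j) * M) ^ (j + k)
      ≤ ((2 * (j + k)).choose (2 * j) : ℝ) ^ (j + k) *
          ((P * A ^ (j + k)) ^ j * ((2 * (j + k))! * P * B ^ (j + k)) ^ k) := by
        rw [mul_pow]; gcongr
    _ ≤ ((j + k).choose j : ℝ) ^ (j + k) * ((2 * (j + k))! : ℝ) ^ j *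
          ((P * A ^ (j + k)) ^ j * ((2 * (j + k))! * P * B ^ (j + k)) ^ k) := by
        gcongr
    _ = _ := by ring

lemma pbExp_add_pow_le {g h : (Fin n → Bool) → ℝ} (i : Fin n)
    (hg : ∀ x, g (flipAt i x) = -g x) (hh : ∀ x, h (flipAt i x) = h x) {r : ℕ} (hr : 0 < r)
    {P A B : ℝ} (hP : 0 ≤ P) (hA : 0 ≤ A) (hB : 0 ≤ B)
    (hgA : pbExp n (fun x => g x ^ (2 * r)) ≤ P * A ^ r)
    (hhB : pbExp n (fun x => h x ^ (2 * r)) ≤ (2 * r)! * P * B ^ r) :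
    pbExp n (fun x => (g x + h x) ^ (2 * r)) ≤ (2 * r)! * P * (A + B) ^ r := by
  rw [pbExp_add_pow_two_mul i hg hh, add_pow, mul_sum]
  refine sum_le_sum fun j hj => ?_
  have hjr : j ≤ r := Nat.lt_succ_iff.mp (mem_range.mp hj)
  refine choose_mul_le_of_pow_le hr hjr hP hA hB ?_
  calc pbExp n (fun x => (g x ^ 2) ^ j * (h x ^ 2) ^ (r - j)) ^ r
      ≤ pbExp n (fun x => (g x ^ 2) ^ r) ^ j * pbExp n (fun x => (h x ^ 2) ^ r) ^ (r - j) := by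
        simpa [Nat.add_sub_cancel' hjr]
          using pbExp_pow_mul_pow_le (fun x => sq_nonneg (g x)) (fun x => sq_nonneg (h x)) j (r - j)
    _ ≤ (P * A ^ r) ^ j * ((2 * r)! * P * B ^ r) ^ (r - j) := by
        simp_rw [← pow_mul]
        have hg0 := pbExp_nonneg (n := n) fun x => (even_two_mul r).pow_nonneg (g x)
        have hh0 := pbExp_nonneg (n := n) fun x => (even_two_mul r).pow_nonneg (h x)
        gcongr

lemma pbExp_fourierSum_pow_le_of_subset {ρ r : ℕ} (hρ : 1 ≤ ρ) (hr : 0 < r) (s : Finset (Fin n))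
    {𝓖 : Finset (Finset (Fin n))} (h𝓖s : ∀ I ∈ 𝓖, I ⊆ s)
    (h𝓖 : ∀ i : Fin n, #(𝓖.filter (fun I => i ∈ I)) ≤ ρ) (v : Finset (Fin n) → ℝ) :
    pbExp n (fun x => fourierSum 𝓖 v x ^ (2 * r)) ≤
      (2 * r)! * ρ ^ (r - 1) * (∑ I ∈ 𝓖, v I ^ 2) ^ r := by
  induction s using Finset.induction_on generalizing 𝓖 with
  | empty =>
    have hcard : #𝓖 ≤ 1 :=
      card_le_one.mpr fun I hI J hJ => by
        rw [subset_empty.mp (h𝓖s I hI), subset_empty.mp (h𝓖s J hJ)]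
    refine (pbExp_fourierSum_pow_le_of_card_le hcard v hr).trans ?_
    rw [Nat.cast_one, one_pow]
    gcongr
    exact one_le_mul_of_one_le_of_one_le (mod_cast Nat.one_le_of_lt (Nat.factorial_pos _))
      (one_le_pow₀ (mod_cast hρ))
  | insert i s hi ih =>
    have hsplit (u : Finset (Fin n) → ℝ) :
        ∑ I ∈ 𝓖, u I = ∑ I ∈ 𝓖.filter (i ∈ ·), u I + ∑ I ∈ 𝓖.filter (i ∉ ·), u I :=
      (sum_filter_add_sum_filter_not 𝓖 _ u).symm
    have hsplitF : fourierSum 𝓖 v = fun x =>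
        fourierSum (𝓖.filter (i ∈ ·)) v x + fourierSum (𝓖.filter (i ∉ ·)) v x :=
      funext fun x => hsplit _
    have hodd (x : Fin n → Bool) :
        fourierSum (𝓖.filter (i ∈ ·)) v (flipAt i x) = -fourierSum (𝓖.filter (i ∈ ·)) v x := by
      rw [fourierSum, fourierSum, ← sum_neg_distrib]
      exact sum_congr rfl fun I hI => by rw [chi_flipAt_of_mem (mem_filter.mp hI).2, mul_neg]
    have heven (x : Fin n → Bool) :
        fourierSum (𝓖.filter (i ∉ ·)) v (flipAt i x) = fourierSum (𝓖.filter (i ∉ ·)) v x :=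
      sum_congr rfl fun I hI => by rw [chi_flipAt_of_notMem (mem_filter.mp hI).2]
    have hrest := ih (𝓖 := 𝓖.filter (i ∉ ·))
      (fun I hI => (subset_insert_iff_of_notMem (mem_filter.mp hI).2).mp
        (h𝓖s I (mem_filter.mp hI).1))
      (fun j => (card_le_card (filter_subset_filter _ (filter_subset _ _))).trans (h𝓖 j))
    have hfew := pbExp_fourierSum_pow_le_of_card_le (h𝓖 i) v hr
    rw [hsplitF, hsplit]
    exact pbExp_add_pow_le i hodd heven hr (by positivity) (sum_nonneg fun _ _ => sq_nonneg _)
      (sum_nonneg fun _ _ => sq_nonneg _) hfew hrest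

lemma pbNorm_two_mul (f : (Fin n → Bool) → ℝ) (r : ℕ) :
    pbNorm n (2 * r) f = pbExp n (fun x => f x ^ (2 * r)) ^ (1 / (2 * r : ℝ)) := by
  simp_rw [pbNorm, ← Nat.cast_ofNat (R := ℝ), ← Nat.cast_mul, Real.rpow_natCast,
    (even_two_mul r).pow_abs]

lemma pbNorm_le_of_pbExp_pow_le {f : (Fin n → Bool) → ℝ} {r : ℕ} (hr : 0 < r) {C : ℝ}
    (hC : 0 ≤ C) (hf : pbExp n (fun x => f x ^ (2 * r)) ≤ C * pbExp n (fun x => f x ^ 2) ^ r) :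
    pbNorm n (2 * r) f ≤ C ^ (1 / (2 * r : ℝ)) * pbNorm n 2 f := by
  have h2 : 0 ≤ pbExp n (fun x => f x ^ 2) := pbExp_nonneg fun x => sq_nonneg (f x)
  have hroot : (pbExp n (fun x => f x ^ 2) ^ r) ^ (1 / (2 * r : ℝ)) =
      pbExp n (fun x => f x ^ 2) ^ (1 / 2 : ℝ) := by
    rw [← Real.rpow_natCast, ← Real.rpow_mul h2]
    congr 1
    field_simp
  calc pbNorm n (2 * r) f = pbExp n (fun x => f x ^ (2 * r)) ^ (1 / (2 * r : ℝ)) :=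
        pbNorm_two_mul f r
    _ ≤ (C * pbExp n (fun x => f x ^ 2) ^ r) ^ (1 / (2 * r : ℝ)) := by
        gcongr
        exact pbExp_nonneg fun x => (even_two_mul r).pow_nonneg (f x)
    _ = C ^ (1 / (2 * r : ℝ)) * pbNorm n 2 f := by
        have hnorm2 := pbNorm_two_mul f 1
        rw [Nat.cast_one, mul_one, mul_one] at hnorm2
        rw [Real.mul_rpow hC (by positivity), hroot, hnorm2]

end PseudoBoolean

theorem hypercontractive_2r2_width_general (n ρ : ℕ) (hρ1 : 1 ≤ ρ)
    (𝓕 : Finset (Finset (Fin n)))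
    (w : Finset (Fin n) → ℝ)
    (f : (Fin n → Bool) → ℝ) (hf : ∀ x, f x = ∑ I ∈ 𝓕, w I * chi I x)
    (hρ : ∀ i : Fin n, (𝓕.filter (fun I => i ∈ I)).card ≤ ρ)
    (r : ℕ) (hr : 0 < r) :
    pbNorm n (2 * r) f ≤
      (((2 * r).factorial * ρ ^ (r - 1) : ℕ) : ℝ) ^ (1 / (2 * r : ℝ)) * pbNorm n 2 f ∧
    pbExp n (fun x => f x ^ (2 * r)) ≤
      (((2 * r).factorial * ρ ^ (r - 1) : ℕ) : ℝ) * (pbExp n (fun x => f x ^ 2)) ^ r := by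
  obtain rfl : f = PseudoBoolean.fourierSum 𝓕 w := funext hf
  have hmoment := PseudoBoolean.pbExp_fourierSum_pow_le_of_subset hρ1 hr univ
    (fun I _ => subset_univ I) hρ w
  rw [← PseudoBoolean.pbExp_fourierSum_sq] at hmoment
  push_cast
  exact ⟨PseudoBoolean.pbNorm_le_of_pbExp_pow_le hr (by positivity) hmoment, hmoment⟩

/-- **Hypercontractive Inequality for bounded Fourier width (even integer norms).**
If `f : {-1,1}^n → ℝ` has Fourier width `ρ ≥ 1`, then for each positive integer `r`,
`‖f‖_{2r} ≤ ((2r)! ρ^{r-1})^{1/(2r)} ‖f‖₂`; equivalently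
`E[f(x)^{2r}] ≤ (2r)! ρ^{r-1} E[f(x)^2]^r`. -/
theorem hypercontractive_2r2_width (n ρ : ℕ) (hρ1 : 1 ≤ ρ)
    (𝓕 : Finset (Finset (Fin n)))
    (w : Finset (Fin n) → ℝ) (hw : ∀ I ∈ 𝓕, w I ≠ 0)
    (f : (Fin n → Bool) → ℝ) (hf : ∀ x, f x = ∑ I ∈ 𝓕, w I * chi I x)
    (hρ : ∀ i : Fin n, (𝓕.filter (fun I => i ∈ I)).card ≤ ρ)
    (r : ℕ) (hr : 0 < r) :
    pbNorm n (2 * r) f ≤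
      (((2 * r).factorial * ρ ^ (r - 1) : ℕ) : ℝ) ^ (1 / (2 * r : ℝ)) * pbNorm n 2 f ∧
    pbExp n (fun x => f x ^ (2 * r)) ≤
      (((2 * r).factorial * ρ ^ (r - 1) : ℕ) : ℝ) * (pbExp n (fun x => f x ^ 2)) ^ r :=
  hypercontractive_2r2_width_general n ρ hρ1 𝓕 w f hf hρ r hr
end

section
/- Let 𝓕 = {I_1, …, I_m} be a family of m distinct subsets of [n] such that every i ∈ [n] belongs to at most ρ sets of 𝓕. Then for every pair of indices p ≠ q with I_p ≠ I_q, the number of pairs (s,t) ∈ [m]^2 such that the symmetric difference I_s Δ I_t equals I_p Δ I_q is at most 2ρ. -/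
/-!
If `I s ∆ I t = D`, then `I t = I s ∆ D`, so for an injective family `s` determines `t`.
Fix `a ∈ I p ∆ I q`. Every pair `(s, t)` with `I s ∆ I t = I p ∆ I q` has `a ∈ I s` or `a ∈ I t`,
so it is determined by one of at most `ρ` sets containing `a`, with the two cases exchanged by
swapping the pair.
-/

open Finset Function

variable {ι α : Type*}

theorem injOn_fst_of_symmDiff_eq [GeneralizedBooleanAlgebra α] {I : ι → α} (hI : Injective I)
    (D : α) : Set.InjOn Prod.fst {st : ι × ι | symmDiff (I st.1) (I st.2) = D} := by
  rintro ⟨s, t⟩ hst ⟨s', t'⟩ hst' (rfl : s = s')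
  exact Prod.ext rfl (hI (symmDiff_right_injective _ (hst.trans hst'.symm)))

section
variable [Fintype ι] [DecidableEq α] {I : ι → Finset α}

theorem card_symmDiff_eq_and_mem_fst_le (hI : Injective I) (D : Finset α) (a : α) :
    #{st : ι × ι | symmDiff (I st.1) (I st.2) = D ∧ a ∈ I st.1} ≤ #{j | a ∈ I j} := by
  refine card_le_card_of_injOn Prod.fst (fun st hst => ?_) fun st hst st' hst' => ?_
  · simp only [coe_filter, mem_univ, true_and, Set.mem_ofPred_eq] at hst ⊢
    exact hst.2
  · simp only [coe_filter, mem_univ, true_and, Set.mem_ofPred_eq] at hst hst'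
    exact injOn_fst_of_symmDiff_eq hI D hst.1 hst'.1

theorem card_symmDiff_eq_le_two_mul (hI : Injective I) {D : Finset α} {a : α} (ha : a ∈ D) :
    #{st : ι × ι | symmDiff (I st.1) (I st.2) = D} ≤ 2 * #{j | a ∈ I j} := by
  classical
  set A := ({st : ι × ι | symmDiff (I st.1) (I st.2) = D ∧ a ∈ I st.1} : Finset (ι × ι))
  have hcover : ({st : ι × ι | symmDiff (I st.1) (I st.2) = D} : Finset (ι × ι)) ⊆
      A ∪ A.map (Equiv.prodComm ι ι) := by
    rintro ⟨s, t⟩ hst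
    simp only [mem_filter, mem_univ, true_and] at hst
    have hmem : a ∈ I s ∨ a ∈ I t := by
      rw [← hst, mem_symmDiff] at ha
      tauto
    simp only [A, mem_union, mem_map_equiv, mem_filter, mem_univ, true_and,
      Equiv.prodComm_symm, Equiv.prodComm_apply, Prod.swap_prod_mk, symmDiff_comm (I t)]
    tauto
  calc _ ≤ #(A ∪ A.map (Equiv.prodComm ι ι)) := card_le_card hcover
    _ ≤ #A + #A := (card_union_le _ _).trans_eq (by rw [card_map])
    _ ≤ 2 * #{j | a ∈ I j} := by
      have hA : #A ≤ #{j | a ∈ I j} := card_symmDiff_eq_and_mem_fst_le hI D a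
      omega
end

theorem pairs_with_same_symmDiff_le_general (n m ρ : ℕ)
    (I : Fin m → Finset (Fin n)) (hinj : Function.Injective I)
    (hρ : ∀ i : Fin n, (Finset.univ.filter (fun j => i ∈ I j)).card ≤ ρ)
    (p q : Fin m) (hIpq : I p ≠ I q) :
    (Finset.univ.filter (fun st : Fin m × Fin m =>
        symmDiff (I st.1) (I st.2) = symmDiff (I p) (I q))).card ≤ 2 * ρ := by
  obtain ⟨a, ha⟩ : (symmDiff (I p) (I q)).Nonempty := by
    rwa [nonempty_iff_ne_empty, ← bot_eq_empty, Ne, symmDiff_eq_bot]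
  exact (card_symmDiff_eq_le_two_mul hinj ha).trans (Nat.mul_le_mul_left 2 (hρ a))

/-- Let `𝓕 = {I_1, …, I_m}` be a family of `m` distinct subsets of `[n]` such that every
`i ∈ [n]` belongs to at most `ρ` sets of the family. Then for indices `p ≠ q` (so
`I_p ≠ I_q`), the number of pairs `(s,t)` with `I_s Δ I_t = I_p Δ I_q` is at most `2ρ`. -/
theorem pairs_with_same_symmDiff_le (n m ρ : ℕ)
    (I : Fin m → Finset (Fin n)) (hinj : Function.Injective I)
    (hρ : ∀ i : Fin n, (Finset.univ.filter (fun j => i ∈ I j)).card ≤ ρ)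
    (p q : Fin m) (hpq : p ≠ q) (hIpq : I p ≠ I q) :
    (Finset.univ.filter (fun st : Fin m × Fin m =>
        symmDiff (I st.1) (I st.2) = symmDiff (I p) (I q))).card ≤ 2 * ρ :=
  pairs_with_same_symmDiff_le_general n m ρ I hinj hρ p q hIpq
end

section
/- Let n ≥ 1 and let f : {-1,1}^n → ℝ be defined by f(x) = 1 + Σ_{i=1}^n x_i. Then E[f(x)^2] = n + 1 and E[f(x)^4] = 3n^2 + 4n + 1, so that E[f(x)^4] / E[f(x)^2]^2 = 3 - 2/(n+1). (This shows the coefficient 2ρ + 1 - 2ρ/m in the width-based (4,2)-hypercontractive inequality is attained with equality when ρ = 1 and m = n + 1.) -/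
/-! Conditioning on the first coordinate, `E_{n+1}[h(c + S)]` is the average of
`E_n[h(c + 1 + S)]` and `E_n[h(c - 1 + S)]`, where `S = ∑ xᵢ`. Keeping the shift `c` free, the
second and fourth moments of `c + S` therefore follow by induction on `n`; the theorem is the
case `c = 1`. -/

theorem pbExp_succ (n : ℕ) (g : (Fin (n + 1) → Bool) → ℝ) :
    pbExp (n + 1) g =
      (pbExp n (fun x => g (Fin.cons true x)) + pbExp n (fun x => g (Fin.cons false x))) / 2 := by
  simp only [pbExp, ← (Fin.consEquiv fun _ => Bool).sum_comp, Fintype.sum_prod_type,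
    Fintype.sum_bool, Fin.consEquiv, Equiv.coe_fn_mk]
  ring

theorem sum_sgn_cons (n : ℕ) (b : Bool) (x : Fin n → Bool) :
    ∑ i, sgn (Fin.cons (α := fun _ => Bool) b x i) = sgn b + ∑ i, sgn (x i) := by
  simp [Fin.sum_univ_succ]

theorem pbExp_add_sum_sgn_sq (n : ℕ) (c : ℝ) :
    pbExp n (fun x => (c + ∑ i, sgn (x i)) ^ 2) = c ^ 2 + n := by
  induction n generalizing c with
  | zero => simp [pbExp]
  | succ n ih =>
    simp only [pbExp_succ, sum_sgn_cons, ← add_assoc]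
    rw [ih, ih]
    simp only [sgn]
    push_cast
    ring

theorem pbExp_add_sum_sgn_pow_four (n : ℕ) (c : ℝ) :
    pbExp n (fun x => (c + ∑ i, sgn (x i)) ^ 4) = c ^ 4 + 6 * n * c ^ 2 + 3 * n ^ 2 - 2 * n := by
  induction n generalizing c with
  | zero => simp [pbExp]
  | succ n ih =>
    simp only [pbExp_succ, sum_sgn_cons, ← add_assoc]
    rw [ih, ih]
    simp only [sgn]
    push_cast
    ring

theorem sharpness_example_width_one_general (n : ℕ)
    (f : (Fin n → Bool) → ℝ) (hf : ∀ x, f x = 1 + ∑ i : Fin n, sgn (x i)) :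
    pbExp n (fun x => f x ^ 2) = n + 1 ∧
    pbExp n (fun x => f x ^ 4) = 3 * (n : ℝ) ^ 2 + 4 * n + 1 ∧
    pbExp n (fun x => f x ^ 4) / (pbExp n (fun x => f x ^ 2)) ^ 2 =
      3 - 2 / ((n : ℝ) + 1) := by
  have h2 : pbExp n (fun x => f x ^ 2) = n + 1 := by
    simp only [hf, pbExp_add_sum_sgn_sq]
    ring
  have h4 : pbExp n (fun x => f x ^ 4) = 3 * (n : ℝ) ^ 2 + 4 * n + 1 := by
    simp only [hf, pbExp_add_sum_sgn_pow_four]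
    ring
  refine ⟨h2, h4, ?_⟩
  rw [h2, h4]
  field_simp
  ring

/-- For `f(x) = 1 + ∑_{i=1}^n x_i` on `{-1,1}^n` (`n ≥ 1`), one has `E[f(x)^2] = n + 1`,
`E[f(x)^4] = 3n² + 4n + 1`, and hence `E[f(x)^4] / E[f(x)^2]^2 = 3 - 2/(n+1)`, attaining
the coefficient `2ρ + 1 - 2ρ/m` of the width-based (4,2)-hypercontractive inequality
with `ρ = 1`, `m = n + 1`. -/
theorem sharpness_example_width_one (n : ℕ) (hn : 1 ≤ n)
    (f : (Fin n → Bool) → ℝ) (hf : ∀ x, f x = 1 + ∑ i : Fin n, sgn (x i)) :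
    pbExp n (fun x => f x ^ 2) = n + 1 ∧
    pbExp n (fun x => f x ^ 4) = 3 * (n : ℝ) ^ 2 + 4 * n + 1 ∧
    pbExp n (fun x => f x ^ 4) / (pbExp n (fun x => f x ^ 2)) ^ 2 =
      3 - 2 / ((n : ℝ) + 1) :=
  sharpness_example_width_one_general n f hf
end

section
/- Let X be a real random variable with E[X] = 0 and E[X^4] ≤ b · E[X^2]^2 for some positive constant b, and suppose E[X^2] > 0. Then P(X ≥ (1/2)·√(E[X^2]/b)) > 0. -/
/-!
Suppose `X < t := ½ √(E X² / b)` almost surely. As `E X = 0`, `E|X| = 2 E X⁺ < 2t`.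
On the other hand the moment interpolation `(E X²)³ ≤ (E|X|)² E X⁴ ≤ b (E|X|)² (E X²)²`
gives `E|X| ≥ √(E X² / b) = 2t`.
-/

open MeasureTheory

lemma sq_le_abs_add_pow_four (x : ℝ) : x ^ 2 ≤ |x| + x ^ 4 := by
  rcases le_total |x| 1 with h | h
  · nlinarith [abs_nonneg x, sq_abs x, pow_nonneg (sq_nonneg x) 2]
  · nlinarith [abs_nonneg x, sq_abs x, sq_nonneg (x ^ 2 - 1)]

lemma three_mul_mul_sq_mul_sq_le_pow_four_add_abs {a b : ℝ} (ha : 0 ≤ a) (hb : 0 ≤ b)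
    (x : ℝ) :
    3 * a * b ^ 2 * x ^ 2 ≤ a ^ 3 * x ^ 4 + 2 * b ^ 3 * |x| := by
  rw [← sq_abs x, show x ^ 4 = |x| ^ 4 by rw [pow_abs, abs_of_nonneg (by positivity)]]
  -- `a³y⁴ - 3ab²y² + 2b³y = y (ay - b)² (ay + 2b)` with `y = |x|`
  have hfactor : 0 ≤ |x| * (a * |x| - b) ^ 2 * (a * |x| + 2 * b) := by positivity
  nlinarith [hfactor]

section

variable {α : Type*} [MeasurableSpace α] {μ : Measure α}

theorem integral_sq_pow_three_le_sq_integral_abs_mul_integral_pow_four {f : α → ℝ}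
    (h1 : Integrable f μ) (h4 : Integrable (fun a => f a ^ 4) μ) :
    (∫ a, f a ^ 2 ∂μ) ^ 3 ≤ (∫ a, |f a| ∂μ) ^ 2 * ∫ a, f a ^ 4 ∂μ := by
  set A := ∫ a, |f a| ∂μ
  set B := ∫ a, f a ^ 2 ∂μ
  set C := ∫ a, f a ^ 4 ∂μ
  have h2 : Integrable (fun a => f a ^ 2) μ :=
    (h1.abs.add h4).mono' (h1.aestronglyMeasurable.pow 2) (.of_forall fun a => by
      simpa [abs_of_nonneg (sq_nonneg (f a))] using sq_le_abs_add_pow_four (f a))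
  have hA : 0 ≤ A := integral_nonneg fun a => abs_nonneg _
  have hB : 0 ≤ B := integral_nonneg fun a => sq_nonneg _
  rcases hA.eq_or_lt with hA0 | hA0
  · have hf0 : f =ᵐ[μ] 0 := by
      have := (integral_eq_zero_iff_of_nonneg (fun a => abs_nonneg (f a)) h1.abs).mp hA0.symm
      filter_upwards [this] with a ha using abs_eq_zero.mp ha
    have hB0 : B = 0 := integral_eq_zero_of_ae (by filter_upwards [hf0] with a ha; simp [ha])
    rw [hB0, zero_pow three_ne_zero]
    exact mul_nonneg (sq_nonneg A) (integral_nonneg fun a => by positivity)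
  -- Integrate the pointwise inequality with `a = A` and `b = B`, then cancel `A > 0`.
  have hAB : 3 * A * B ^ 2 * B ≤ A ^ 3 * C + 2 * B ^ 3 * A := by
    have := integral_mono (h2.const_mul (3 * A * B ^ 2))
      ((h4.const_mul (A ^ 3)).add (h1.abs.const_mul (2 * B ^ 3)))
      fun a => by simpa using three_mul_mul_sq_mul_sq_le_pow_four_add_abs hA hB (f a)
    simpa [integral_const_mul, integral_add (h4.const_mul _) (h1.abs.const_mul _)] using this
  nlinarith

theorem integral_lt_of_ae_lt [IsProbabilityMeasure μ] {f : α → ℝ} {c : ℝ}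
    (hf : Integrable f μ) (h : ∀ᵐ a ∂μ, f a < c) : ∫ a, f a ∂μ < c := by
  have hpos : 0 < ∫ a, (c - f a) ∂μ := by
    rw [integral_pos_iff_support_of_nonneg_ae (h.mono fun a ha => (sub_pos.mpr ha).le)
      ((integrable_const c).sub hf)]
    refine pos_iff_ne_zero.mpr fun h0 => ?_
    obtain ⟨a, ha, hlt⟩ := ((measure_eq_zero_iff_ae_notMem.mp h0).and h).exists
    exact ha (sub_ne_zero.mpr hlt.ne')
  rw [integral_sub (integrable_const c) hf] at hpos
  simpa using hpos

theorem integral_abs_eq_two_mul_integral_max_zero {f : α → ℝ} (hf : Integrable f μ)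
    (hmean : ∫ a, f a ∂μ = 0) : ∫ a, |f a| ∂μ = 2 * ∫ a, max (f a) 0 ∂μ := by
  have habs : (fun a => |f a|) = fun a => 2 * max (f a) 0 - f a := by
    ext a; grind
  rw [habs, integral_sub (hf.pos_part.const_mul 2) hf, integral_const_mul, hmean, sub_zero]

end

/-- **Fourth-moment anti-concentration lemma (Alon et al.).**
If `X` is a real random variable with finite fourth moment, `E[X] = 0`,
`E[X⁴] ≤ b · E[X²]²` for a positive constant `b`, and `E[X²] > 0`, then
`P(X ≥ (1/2)·√(E[X²]/b)) > 0`. -/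
theorem prob_pos_of_fourth_moment {Ω : Type*} [MeasurableSpace Ω]
    (μ : Measure Ω) [IsProbabilityMeasure μ] (X : Ω → ℝ)
    (hX : MemLp X 4 μ)
    (hmean : ∫ ω, X ω ∂μ = 0)
    (b : ℝ) (hb : 0 < b)
    (hmom : ∫ ω, (X ω) ^ 4 ∂μ ≤ b * (∫ ω, (X ω) ^ 2 ∂μ) ^ 2)
    (hvar : 0 < ∫ ω, (X ω) ^ 2 ∂μ) :
    0 < μ {ω | (1 / 2) * Real.sqrt ((∫ ω', (X ω') ^ 2 ∂μ) / b) ≤ X ω} := by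
  set σ2 := ∫ ω, X ω ^ 2 ∂μ
  set u := Real.sqrt (σ2 / b)
  have hu : 0 < u := Real.sqrt_pos.mpr (div_pos hvar hb)
  have hσ2 : σ2 = b * u ^ 2 := by
    rw [Real.sq_sqrt (div_pos hvar hb).le]; field_simp
  have h1 : Integrable X μ := hX.integrable (by norm_num)
  have h4 : Integrable (fun ω => X ω ^ 4) μ := by
    have := hX.integrable_norm_pow (p := 4) (by norm_num)
    simp only [Real.norm_eq_abs, pow_abs] at this
    exact this.congr (.of_forall fun ω => abs_of_nonneg (by positivity))
  have hu_le : u ≤ ∫ ω, |X ω| ∂μ := by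
    have hinterp : σ2 ^ 3 ≤ (∫ ω, |X ω| ∂μ) ^ 2 * (b * σ2 ^ 2) :=
      (integral_sq_pow_three_le_sq_integral_abs_mul_integral_pow_four h1 h4).trans
        (mul_le_mul_of_nonneg_left hmom (sq_nonneg _))
    rw [hσ2] at hinterp
    have hsq : u ^ 2 ≤ (∫ ω, |X ω| ∂μ) ^ 2 :=
      le_of_mul_le_mul_right (by linarith) (by positivity : 0 < b ^ 3 * u ^ 4)
    exact (pow_le_pow_iff_left₀ hu.le (integral_nonneg fun ω => abs_nonneg _) two_ne_zero).mp hsq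
  by_contra hzero
  have hlt : ∀ᵐ ω ∂μ, X ω < 1 / 2 * u := by
    rw [ae_iff]
    simpa only [not_lt, pos_iff_ne_zero, not_not] using hzero
  have hpos_lt := integral_lt_of_ae_lt h1.pos_part (hlt.mono fun ω h => max_lt h (by positivity))
  rw [integral_abs_eq_two_mul_integral_max_zero h1 hmean] at hu_le
  linarith
end
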